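/- arXiv:math/0702766 — 5 statements merged into one kernel-verified Lean document; each statement's English description precedes it below -/
import Mathlib

section
/- Let x, y be coprime integers, p, q distinct odd primes, and suppose x^p + y^p = z^q with p not dividing z and z ∈ ℤ. Then there exist integers A, B with x + y = A^q and (x^p + y^p)/(x + y) = B^q. -/
theorem stmt2 (x y z : ℤ) (p q : ℕ) (hp : p.Prime) (hq : q.Prime) (hpo : Odd p)
    (hqo : Odd q) (hne : p ≠ q) (hxy : IsCoprime x y) (hpz : ¬ (p : ℤ) ∣ z)
    (h : x ^ p + y ^ p = z ^ q) :
    ∃ A B : ℤ, x + y = A ^ q ∧ (x ^ p + y ^ p) / (x + y) = B ^ q := by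
  set S : ℤ := ∑ i ∈ Finset.range p, x ^ i * (-y) ^ (p - 1 - i) with hS
  have key : x ^ p + y ^ p = S * (x + y) := by
    have hg := geom_sum₂_mul x (-y) p
    rw [hpo.neg_pow] at hg
    rw [← hS] at hg
    linarith [hg]
  have hz0 : z ≠ 0 := by rintro rfl; exact hpz (dvd_zero _)
  have hxy0 : x + y ≠ 0 := by
    intro h0
    have hzq : z ^ q = 0 := by rw [← h, key, h0, mul_zero]
    exact hz0 (pow_eq_zero_iff hq.ne_zero |>.mp hzq)
  have hmod : (x + y) ∣ S - p * x ^ (p - 1) := by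
    have hp1 : (p : ℤ) * x ^ (p - 1) = ∑ _i ∈ Finset.range p, x ^ (p - 1) := by
      simp [Finset.sum_const, mul_comm]
    rw [hS, hp1, ← Finset.sum_sub_distrib]
    apply Finset.dvd_sum
    intro i hi
    have hi' : i < p := Finset.mem_range.mp hi
    have hsplit : x ^ (p - 1) = x ^ i * x ^ (p - 1 - i) := by
      rw [← pow_add]; congr 1; omega
    rw [hsplit, ← mul_sub]
    apply Dvd.dvd.mul_left
    have hd : ((-y) - x) ∣ ((-y) ^ (p - 1 - i) - x ^ (p - 1 - i)) :=
      sub_dvd_pow_sub_pow _ _ _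
    have hdvd : (x + y) ∣ ((-y) - x) := ⟨-1, by ring⟩
    exact hdvd.trans hd
  have hmul : (x + y) * S = z ^ q := by rw [← h, key, mul_comm]
  have hcop : IsCoprime (x + y) S := by
    rw [Int.isCoprime_iff_gcd_eq_one]
    by_contra hg
    obtain ⟨r, hr, hrd⟩ := Nat.exists_prime_and_dvd hg
    have hrP : Prime (r : ℤ) := Nat.prime_iff_prime_int.mp hr
    have hrxy : (r : ℤ) ∣ x + y :=
      dvd_trans (Int.natCast_dvd_natCast.mpr hrd) (Int.gcd_dvd_left _ _)
    have hrS : (r : ℤ) ∣ S :=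
      dvd_trans (Int.natCast_dvd_natCast.mpr hrd) (Int.gcd_dvd_right _ _)
    have hrz : (r : ℤ) ∣ z := by
      have : (r : ℤ) ∣ z ^ q := by rw [← hmul]; exact hrS.mul_left _
      exact hrP.dvd_of_dvd_pow this
    have hrpx : (r : ℤ) ∣ (p : ℤ) * x ^ (p - 1) := by
      have h1 : (r : ℤ) ∣ S - p * x ^ (p - 1) := hrxy.trans hmod
      have := dvd_sub hrS h1
      simpa using this
    have hrx : ¬ (r : ℤ) ∣ x := by
      intro hdx
      have hdy : (r : ℤ) ∣ y := (dvd_add_right hdx).mp hrxy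
      have := hxy.isUnit_of_dvd' hdx hdy
      exact hrP.not_unit this
    have hrp : (r : ℤ) ∣ (p : ℤ) := by
      rcases hrP.dvd_mul.mp hrpx with h1 | h1
      · exact h1
      · exact absurd (hrP.dvd_of_dvd_pow h1) hrx
    have hrep : r = p := by
      exact_mod_cast (Nat.prime_dvd_prime_iff_eq hr hp).mp (by exact_mod_cast hrp)
    exact hpz (hrep ▸ hrz)
  obtain ⟨A, hA⟩ := exists_associated_pow_of_mul_eq_pow' hcop hmul
  obtain ⟨B, hB⟩ := exists_associated_pow_of_mul_eq_pow' hcop.symm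
    (by rw [mul_comm]; exact hmul)
  have hA' : ∃ A' : ℤ, x + y = A' ^ q := by
    rcases Int.associated_iff.mp hA with h1 | h1
    · exact ⟨A, h1.symm⟩
    · exact ⟨-A, by rw [hqo.neg_pow]; omega⟩
  have hB' : ∃ B' : ℤ, S = B' ^ q := by
    rcases Int.associated_iff.mp hB with h1 | h1
    · exact ⟨B, h1.symm⟩
    · exact ⟨-B, by rw [hqo.neg_pow]; omega⟩
  obtain ⟨A', hA'⟩ := hA'
  obtain ⟨B', hB'⟩ := hB'
  refine ⟨A', B', hA', ?_⟩
  rw [key, Int.mul_ediv_cancel _ hxy0, hB']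
end

section
/- Let p, q be distinct odd primes. The equation X^p + Y^q = 1 has a nontrivial rational solution (X, Y ∈ ℚ, X·Y ≠ 0) if and only if the equation x^p + y^q = z^(p·q) has a nontrivial solution in integers x, y, z with gcd(x, gcd(y, z)) = 1 and x·y·z ≠ 0. -/
theorem stmt5 (p q : ℕ) (hp : p.Prime) (hq : q.Prime) (hpo : Odd p) (hqo : Odd q)
    (hne : p ≠ q) :
    (∃ X Y : ℚ, X ^ p + Y ^ q = 1 ∧ X * Y ≠ 0) ↔
      (∃ x y z : ℤ, x ^ p + y ^ q = z ^ (p * q) ∧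
        Int.gcd x (Int.gcd y z : ℤ) = 1 ∧ x * y * z ≠ 0) := by
  have hp0 : 0 < p := hp.pos
  have hq0 : 0 < q := hq.pos
  constructor
  · rintro ⟨X, Y, h, hXY⟩
    have hX : X ≠ 0 := fun h0 => hXY (by simp [h0])
    have hY : Y ≠ 0 := fun h0 => hXY (by simp [h0])
    have hXd : ((X.den : ℚ)) ≠ 0 := by exact_mod_cast X.den_nz
    have hYd : ((Y.den : ℚ)) ≠ 0 := by exact_mod_cast Y.den_nz
    have hXn : (X.num : ℚ) = X * X.den :=
      (div_eq_iff hXd).mp (Rat.num_div_den X)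
    have hYn : (Y.num : ℚ) = Y * Y.den :=
      (div_eq_iff hYd).mp (Rat.num_div_den Y)
    have key : X.num ^ p * (Y.den : ℤ) ^ q + Y.num ^ q * (X.den : ℤ) ^ p
        = (X.den : ℤ) ^ p * (Y.den : ℤ) ^ q := by
      have : (X.num : ℚ) ^ p * (Y.den : ℚ) ^ q + (Y.num : ℚ) ^ q * (X.den : ℚ) ^ p
          = (X.den : ℚ) ^ p * (Y.den : ℚ) ^ q := by
        rw [hXn, hYn]
        calc (X * X.den) ^ p * (Y.den:ℚ) ^ q + (Y * Y.den) ^ q * (X.den:ℚ) ^ p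
            = (X ^ p + Y ^ q) * ((X.den:ℚ) ^ p * (Y.den:ℚ) ^ q) := by ring
          _ = (X.den:ℚ) ^ p * (Y.den:ℚ) ^ q := by rw [h, one_mul]
      exact_mod_cast this
    have hcopX : IsCoprime X.num (X.den : ℤ) :=
      Int.isCoprime_iff_gcd_eq_one.mpr X.reduced
    have hcopY : IsCoprime Y.num (Y.den : ℤ) :=
      Int.isCoprime_iff_gcd_eq_one.mpr Y.reduced
    -- c^p = d^q
    have h1 : ((X.den : ℤ) ^ p) ∣ (Y.den : ℤ) ^ q := by
      have hdvd : (X.den : ℤ) ^ p ∣ X.num ^ p * (Y.den : ℤ) ^ q := by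
        refine ⟨(Y.den : ℤ) ^ q - Y.num ^ q, ?_⟩
        linarith [key]
      exact ((hcopX.pow (n := p) (m := p)).symm).dvd_of_dvd_mul_left hdvd
    have h2 : ((Y.den : ℤ) ^ q) ∣ (X.den : ℤ) ^ p := by
      have hdvd : (Y.den : ℤ) ^ q ∣ Y.num ^ q * (X.den : ℤ) ^ p := by
        refine ⟨(X.den : ℤ) ^ p - X.num ^ p, ?_⟩
        linarith [key]
      exact ((hcopY.pow (n := q) (m := q)).symm).dvd_of_dvd_mul_left hdvd
    have hcd : (X.den : ℤ) ^ p = (Y.den : ℤ) ^ q :=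
      Int.dvd_antisymm (by positivity) (by positivity) h1 h2
    have hcdN : X.den ^ p = Y.den ^ q := by exact_mod_cast hcd
    -- find w with X.den = w ^ q, Y.den = w ^ p
    have hcop_pq : Nat.Coprime q p := (Nat.coprime_primes hq hp).mpr hne.symm
    obtain ⟨s, -, hs⟩ := Nat.exists_mul_mod_eq_one_of_coprime hcop_pq hp.one_lt
    have hbez : q * s = p * (q * s / p) + 1 := by
      conv_lhs => rw [← Nat.div_add_mod (q * s) p]
      rw [hs]
    set t := q * s / p with ht
    have hdpos : 0 < Y.den := Y.pos
    have hcpos : 0 < X.den := X.pos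
    have hdvdw : Y.den ^ t ∣ X.den ^ s := by
      have hpow : (Y.den ^ t) ^ p ∣ (X.den ^ s) ^ p := by
        rw [← pow_mul, ← pow_mul]
        calc Y.den ^ (t * p) ∣ Y.den ^ (q * s) :=
              pow_dvd_pow _ (by rw [hbez, mul_comm t p]; exact Nat.le_succ _)
          _ = X.den ^ (s * p) := by
              rw [pow_mul, ← hcdN, ← pow_mul, mul_comm p s]
      exact (Nat.pow_dvd_pow_iff hp0.ne').mp hpow
    set w := X.den ^ s / Y.den ^ t with hw
    have hwp : w ^ p = Y.den := by
      have hwe : w * Y.den ^ t = X.den ^ s := Nat.div_mul_cancel hdvdw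
      have : (w ^ p) * (Y.den ^ t) ^ p = Y.den * (Y.den ^ t) ^ p := by
        calc (w ^ p) * (Y.den ^ t) ^ p = (w * Y.den ^ t) ^ p := by rw [mul_pow]
          _ = (X.den ^ s) ^ p := by rw [hwe]
          _ = (X.den ^ p) ^ s := by rw [← pow_mul, mul_comm s p, pow_mul]
          _ = (Y.den ^ q) ^ s := by rw [hcdN]
          _ = Y.den ^ (p * t + 1) := by rw [← pow_mul, hbez]
          _ = Y.den * (Y.den ^ t) ^ p := by
              rw [← pow_mul, pow_succ, mul_comm t p, mul_comm]
      exact Nat.eq_of_mul_eq_mul_right (by positivity) this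
    have hwq : w ^ q = X.den := by
      have : (w ^ q) ^ p = X.den ^ p := by
        rw [← pow_mul, mul_comm q p, pow_mul, hwp, hcdN]
      exact Nat.pow_left_injective hp0.ne' this
    have hwpos : 0 < w := by
      rcases Nat.eq_zero_or_pos w with h0 | h0
      · rw [h0, zero_pow hq0.ne'] at hwq; omega
      · exact h0
    have hNc : (X.den : ℤ) ^ p = (w : ℤ) ^ (p * q) := by
      have : ((w : ℤ)) ^ q = (X.den : ℤ) := by exact_mod_cast congrArg (Nat.cast : ℕ → ℤ) hwq
      rw [← this, ← pow_mul, mul_comm q p]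
    have hNd : (Y.den : ℤ) ^ q = (w : ℤ) ^ (p * q) := by
      have : ((w : ℤ)) ^ p = (Y.den : ℤ) := by exact_mod_cast congrArg (Nat.cast : ℕ → ℤ) hwp
      rw [← this, ← pow_mul]
    refine ⟨X.num, Y.num, (w : ℤ), ?_, ?_, ?_⟩
    · have hwz : ((w : ℤ)) ^ (p * q) ≠ 0 := by positivity
      apply mul_right_cancel₀ hwz
      rw [add_mul]
      calc X.num ^ p * (w:ℤ) ^ (p*q) + Y.num ^ q * (w:ℤ) ^ (p*q)
          = X.num ^ p * (Y.den:ℤ) ^ q + Y.num ^ q * (X.den:ℤ) ^ p := by rw [hNc, hNd]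
        _ = (X.den:ℤ) ^ p * (Y.den:ℤ) ^ q := key
        _ = (w:ℤ) ^ (p*q) * (w:ℤ) ^ (p*q) := by rw [hNc, hNd]
    · have hdvd1 : Int.gcd Y.num (w : ℤ) ∣ w := by
        exact_mod_cast (Int.gcd_dvd_right _ _ : (Int.gcd Y.num (w:ℤ) : ℤ) ∣ (w:ℤ))
      have hdvd2 : Int.gcd Y.num (w : ℤ) ∣ X.den :=
        hdvd1.trans (hwq ▸ dvd_pow_self w hq0.ne')
      have hcop : X.num.natAbs.Coprime (Int.gcd Y.num (w : ℤ)) :=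
        Nat.Coprime.coprime_dvd_right hdvd2 X.reduced
      simpa [Int.gcd] using hcop
    · refine mul_ne_zero (mul_ne_zero ?_ ?_) ?_
      · exact Rat.num_ne_zero.mpr hX
      · exact Rat.num_ne_zero.mpr hY
      · exact_mod_cast hwpos.ne'
  · rintro ⟨x, y, z, heq, hgcd, hne0⟩
    have hz : (z : ℚ) ≠ 0 := by
      have : z ≠ 0 := fun h0 => hne0 (by simp [h0])
      exact_mod_cast this
    have hx : x ≠ 0 := fun h0 => hne0 (by simp [h0])
    have hy : y ≠ 0 := fun h0 => hne0 (by simp [h0])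
    refine ⟨(x : ℚ) / (z : ℚ) ^ q, (y : ℚ) / (z : ℚ) ^ p, ?_, ?_⟩
    · have h2 : ((x:ℚ))^p + (y:ℚ)^q = (z:ℚ)^(p*q) := by exact_mod_cast heq
      field_simp
      rw [div_pow, div_pow, ← pow_mul, ← pow_mul, mul_comm q p, ← add_div, h2,
        div_self (pow_ne_zero _ hz)]
    · apply mul_ne_zero <;> apply div_ne_zero
      · exact_mod_cast hx
      · positivity
      · exact_mod_cast hy
      · positivity
end

section
/- Let p, q be distinct odd primes, ζ a primitive p-th root of unity, and δ a root of unity in ℚ(ζ, ξ) (where ξ is a primitive q-th root of unity), i.e., δ ∈ ⟨-ζξ⟩. If δ ≡ 1 (mod q) in the ring of integers of ℚ(ζ, ξ), then δ = 1. -/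
theorem stmt7 (p q : ℕ) (hp : p.Prime) (hq : q.Prime) (hpo : Odd p) (hqo : Odd q)
    (hne : p ≠ q) (K : Type*) [Field K] [CharZero K] (ζ ξ : K)
    (hζ : IsPrimitiveRoot ζ p) (hξ : IsPrimitiveRoot ξ q)
    (δ : K) (k : ℕ) (hδ : δ = (-(ζ * ξ)) ^ k)
    (hcong : ∃ γ : K, IsIntegral ℤ γ ∧ δ - 1 = (q : K) * γ) :
    δ = 1 := by
  obtain ⟨γ, hγint, hγ⟩ := hcong
  have hp0 : 0 < p := hp.pos
  have hq0 : 0 < q := hq.pos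
  have hzx : (ζ * ξ) ^ (p * q) = 1 := by
    rw [mul_pow, pow_mul ζ, hζ.pow_eq_one, one_pow, one_mul, mul_comm p q, pow_mul ξ,
      hξ.pow_eq_one, one_pow]
  have hb : (-(ζ * ξ)) ^ (2 * (p * q)) = 1 := by
    rw [pow_mul, neg_sq, ← pow_mul, mul_comm 2, pow_mul, hzx, one_pow]
  have hδn : δ ^ (2 * (p * q)) = 1 := by
    rw [hδ, ← pow_mul, mul_comm k, pow_mul, hb, one_pow]
  have hfin : IsOfFinOrder δ :=
    isOfFinOrder_iff_pow_eq_one.mpr ⟨2 * (p * q), by positivity, hδn⟩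
  set d := orderOf δ with hdd
  have hd0 : 0 < d := hfin.orderOf_pos
  by_contra hδ1
  have hd1 : d ≠ 1 := fun h => hδ1 (orderOf_eq_one_iff.mp h)
  obtain ⟨ℓ, hℓp, hℓd⟩ := Nat.exists_prime_and_dvd hd1
  obtain ⟨m, hm⟩ := hℓd
  have hεprim : IsPrimitiveRoot (δ ^ m) ℓ :=
    (IsPrimitiveRoot.orderOf δ).pow hd0 (by rw [hm, mul_comm])
  set ε := δ ^ m with hε
  -- δ is integral over ℤ
  have hδint : IsIntegral ℤ δ := by
    rw [hδ]
    exact (((hζ.isIntegral hp0).mul (hξ.isIntegral hq0)).neg).pow k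
  have key : ∀ j : ℕ, ∃ c : K, IsIntegral ℤ c ∧ 1 - ε ^ j = (q : K) * c := by
    intro j
    refine ⟨-((∑ i ∈ Finset.range (m * j), δ ^ i) * γ), ?_, ?_⟩
    · exact ((IsIntegral.sum _ fun i _ => hδint.pow i).mul hγint).neg
    · have hg := geom_sum_mul δ (m * j)
      have : ε ^ j = δ ^ (m * j) := by rw [hε, ← pow_mul]
      rw [this]
      linear_combination hg - (∑ i ∈ Finset.range (m * j), δ ^ i) * hγ
  choose c hcint hceq using key
  obtain ⟨ℓ', hℓ'⟩ : ∃ ℓ', ℓ = ℓ' + 1 := ⟨ℓ - 1, (Nat.succ_pred_eq_of_pos hℓp.pos).symm⟩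
  have hℓ'1 : 1 ≤ ℓ' := by
    have := hℓp.two_le; omega
  rw [hℓ'] at hεprim
  have hprod := hεprim.prod_one_sub_pow_eq_order
  have hq0K : (q : K) ^ ℓ' ≠ 0 := pow_ne_zero _ (Nat.cast_ne_zero.mpr hq0.ne')
  set β : K := ∏ j ∈ Finset.range ℓ', c (j + 1) with hβ
  have hβint : IsIntegral ℤ β := IsIntegral.prod _ fun j _ => hcint _
  have hmain : ((ℓ' : K) + 1) = (q : K) ^ ℓ' * β := by
    rw [← hprod, hβ, Finset.prod_congr rfl fun j _ => hceq (j + 1), Finset.prod_mul_distrib,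
      Finset.prod_const, Finset.card_range]
  -- β is the image of a rational number
  have hker : Function.Injective (algebraMap ℚ K) := (algebraMap ℚ K).injective
  have hβrat : algebraMap ℚ K (((ℓ' : ℚ) + 1) / (q : ℚ) ^ ℓ') = β := by
    have : algebraMap ℚ K (((ℓ' : ℚ) + 1) / (q : ℚ) ^ ℓ') = ((ℓ' : K) + 1) / (q : K) ^ ℓ' := by
      push_cast [map_div₀, map_pow]
      norm_cast
    rw [this, hmain, mul_comm, mul_div_assoc, div_self hq0K, mul_one]
  have hratint : IsIntegral ℤ (((ℓ' : ℚ) + 1) / (q : ℚ) ^ ℓ') := by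
    rw [← isIntegral_algebraMap_iff hker, hβrat]; exact hβint
  obtain ⟨z, hz⟩ := IsIntegrallyClosed.isIntegral_iff.mp hratint
  have hqQ : ((q : ℚ)) ^ ℓ' ≠ 0 := by positivity
  have hzq : ((ℓ' : ℚ) + 1) = (z : ℚ) * (q : ℚ) ^ ℓ' := by
    have : (z : ℚ) = ((ℓ' : ℚ) + 1) / (q : ℚ) ^ ℓ' := hz
    field_simp at this
    linarith [this]
  have hdvdZ : ((q : ℤ)) ^ ℓ' ∣ ((ℓ' : ℤ) + 1) :=
    ⟨z, by exact_mod_cast hzq.trans (mul_comm (z : ℚ) ((q : ℚ) ^ ℓ'))⟩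
  have hdvdN : q ^ ℓ' ∣ ℓ := by
    rw [hℓ']
    exact_mod_cast Int.natCast_dvd_natCast.mp (by exact_mod_cast hdvdZ)
  rcases hℓp.eq_one_or_self_of_dvd _ hdvdN with h1 | h2
  · have : q ∣ 1 := h1 ▸ dvd_pow_self q (by omega)
    have := Nat.le_of_dvd one_pos this
    have := hq.two_le
    omega
  · have hqdl : q ∣ ℓ := h2 ▸ dvd_pow_self q (by omega)
    have hqeq : q = ℓ := (Nat.prime_dvd_prime_iff_eq hq hℓp).mp hqdl
    have : q ^ ℓ' = q ^ 1 := by rw [h2, ← hqeq, pow_one]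
    have hℓ'eq : ℓ' = 1 := Nat.pow_right_injective hq.two_le this
    have : q = 2 := by omega
    rw [this] at hqo
    exact (by decide : ¬ Odd 2) hqo
end

section
/- Let q be a prime and n a positive integer. The q-adic valuation of the binomial coefficient (1/q choose n) (as a rational number) equals -n - v_q(n!). -/
/-- The generalized binomial coefficient `(x choose n) = x(x-1)⋯(x-n+1)/n!` for `x : ℚ`. -/
def genBinom (x : ℚ) (n : ℕ) : ℚ :=
  (∏ j ∈ Finset.range n, (x - j)) / n.factorial

lemma factor_eq (q j : ℕ) (hq : q.Prime) :
    (1 / (q:ℚ) - j) = ((1 - q*j : ℤ) : ℚ) * (q:ℚ)⁻¹ := by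
  have hq0 : (q:ℚ) ≠ 0 := Nat.cast_ne_zero.mpr hq.ne_zero
  field_simp
  push_cast
  ring

lemma factor_ne (q j : ℕ) (hq : q.Prime) : (1 / (q:ℚ) - j) ≠ 0 := by
  rw [factor_eq q j hq]
  have hq0 : (q:ℚ) ≠ 0 := Nat.cast_ne_zero.mpr hq.ne_zero
  refine mul_ne_zero ?_ (inv_ne_zero hq0)
  intro h
  have : (1 - (q:ℤ)*j) = 0 := by exact_mod_cast h
  have hdvd : (q:ℤ) ∣ 1 := ⟨j, by linarith⟩
  have h2 := Int.le_of_dvd one_pos hdvd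
  have := hq.two_le
  omega

lemma factor_val (q j : ℕ) (hq : q.Prime) :
    padicValRat q (1 / (q:ℚ) - j) = -1 := by
  haveI : Fact q.Prime := ⟨hq⟩
  have hq0 : (q:ℚ) ≠ 0 := Nat.cast_ne_zero.mpr hq.ne_zero
  have hne : ((1 - q*j : ℤ) : ℚ) ≠ 0 := by
    intro h
    have : (1 - (q:ℤ)*j) = 0 := by exact_mod_cast h
    have hdvd : (q:ℤ) ∣ 1 := ⟨j, by linarith⟩
    have h2 := Int.le_of_dvd one_pos hdvd
    have := hq.two_le
    omega
  rw [factor_eq q j hq, padicValRat.mul hne (inv_ne_zero hq0),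
    padicValRat.inv, padicValRat.self hq.one_lt, padicValRat.of_int,
    padicValInt.eq_zero_of_not_dvd]
  · ring
  · intro h
    rcases h with ⟨c, hc⟩
    have hdvd : (q:ℤ) ∣ 1 := ⟨c + j, by linarith⟩
    have h2 := Int.le_of_dvd one_pos hdvd
    have := hq.two_le
    omega

lemma prod_val (q n : ℕ) (hq : q.Prime) :
    padicValRat q (∏ j ∈ Finset.range n, (1 / (q:ℚ) - j)) = -(n : ℤ) := by
  haveI : Fact q.Prime := ⟨hq⟩
  induction n with
  | zero => simp [padicValRat.one]
  | succ n ih =>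
    rw [Finset.prod_range_succ, padicValRat.mul
      (Finset.prod_ne_zero_iff.mpr fun j _ => factor_ne q j hq) (factor_ne q n hq),
      ih, factor_val q n hq]
    push_cast
    ring

theorem stmt14 (q n : ℕ) (hq : q.Prime) (hn : 0 < n) :
    padicValRat q (genBinom (1 / q) n) = -(n : ℤ) - (padicValNat q n.factorial : ℤ) := by
  haveI : Fact q.Prime := ⟨hq⟩
  have hfac : ((n.factorial : ℚ)) ≠ 0 := by
    exact_mod_cast n.factorial_ne_zero
  rw [genBinom, padicValRat.div
    (Finset.prod_ne_zero_iff.mpr fun j _ => factor_ne q j hq) hfac,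
    prod_val q n hq, padicValRat.of_nat]
end

section
/- Let p be an odd prime, ζ a primitive p-th root of unity, x, y coprime integers, and e ∈ {0, 1} with e = 1 iff p ∣ x + y. Set α = (x + ζy)/(1-ζ)^e. Then for distinct a, b ∈ {1, ..., p-1}, the ideals (σ_a(α)) and (σ_b(α)) are coprime in ℤ[ζ], where σ_c : ζ ↦ ζ^c. -/
open NumberField Polynomial

theorem stmt18 (p : ℕ) (hp : p.Prime) (hpo : Odd p) (x y : ℤ) (hxy : IsCoprime x y)
    (e : ℕ) (he : e ≤ 1) (he1 : e = 1 ↔ (p : ℤ) ∣ (x + y))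
    (K : Type*) [Field K] [CharZero K] (ζ : K) (hζ : IsPrimitiveRoot ζ p)
    (a b : ℕ) (ha : 1 ≤ a) (ha' : a ≤ p - 1) (hb : 1 ≤ b) (hb' : b ≤ p - 1) (hab : a ≠ b)
    (αa αb : RingOfIntegers K)
    (hαa : algebraMap (RingOfIntegers K) K αa = ((x : K) + ζ ^ a * y) / (1 - ζ ^ a) ^ e)
    (hαb : algebraMap (RingOfIntegers K) K αb = ((x : K) + ζ ^ b * y) / (1 - ζ ^ b) ^ e) :
    Ideal.span {αa} ⊔ Ideal.span {αb} = ⊤ := by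
  haveI : Fact p.Prime := ⟨hp⟩
  have hp1 : 1 < p := hp.one_lt
  have inj : Function.Injective (algebraMap (RingOfIntegers K) K) :=
    RingOfIntegers.coe_injective
  set η : RingOfIntegers K := ⟨ζ, hζ.isIntegral hp.pos⟩ with hηdef
  have hmapη : algebraMap (RingOfIntegers K) K η = ζ := rfl
  have hη : IsPrimitiveRoot η p :=
    IsPrimitiveRoot.of_map_of_injective (f := algebraMap (RingOfIntegers K) K)
      (by rwa [hmapη]) inj
  have hnd : ∀ c : ℕ, 1 ≤ c → c ≤ p - 1 → ¬ p ∣ c := by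
    intro c h1 h2 hdvd
    have := Nat.le_of_dvd (by omega) hdvd
    omega
  have hnda := hnd a ha ha'
  have hndb := hnd b hb hb'
  have hζc : ∀ c : ℕ, ¬ p ∣ c → (1 : K) - ζ ^ c ≠ 0 := by
    intro c hc
    exact sub_ne_zero.mpr fun h => hc ((hζ.pow_eq_one_iff_dvd c).mp h.symm)
  have hηc : ∀ c : ℕ, ¬ p ∣ c → (1 : RingOfIntegers K) - η ^ c ≠ 0 := by
    intro c hc h0
    apply hζc c hc
    have := congrArg (algebraMap (RingOfIntegers K) K) h0
    simpa [hmapη] using this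
  -- key divisibility lemma
  have key : ∀ c d : ℕ, ¬ p ∣ c → (1 - η ^ c) ∣ (1 - η ^ d) := by
    intro c d hc
    have hcop : Nat.Coprime c p := (hp.coprime_iff_not_dvd.mpr hc).symm
    obtain ⟨m, -, hm⟩ := Nat.exists_mul_mod_eq_one_of_coprime hcop hp1
    have hmod : c * (m * d) ≡ d [MOD p] := by
      have h1 : c * m ≡ 1 [MOD p] := by
        show c * m % p = 1 % p
        rw [hm, Nat.mod_eq_of_lt hp1]
      calc c * (m * d) = (c * m) * d := by ring
        _ ≡ 1 * d [MOD p] := h1.mul_right d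
        _ = d := by ring
    have hpow : (η ^ c) ^ (m * d) = η ^ d := by
      rw [← pow_mul]
      have hord : orderOf η = p := hη.eq_orderOf.symm
      rw [← pow_mod_orderOf, hord, hmod, ← hord, pow_mod_orderOf]
    have : 1 - η ^ d = 1 - (η ^ c) ^ (m * d) := by rw [hpow]
    rw [this]
    exact one_sub_dvd_one_sub_pow (η ^ c) (m * d)
  -- p as a product
  have hpfac : ((p : RingOfIntegers K)) = ∏ μ ∈ primitiveRoots p (RingOfIntegers K), (1 - μ) := by
    have h1 := cyclotomic_eq_prod_X_sub_primitiveRoots hη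
    have h2 : Polynomial.eval 1 (cyclotomic p (RingOfIntegers K)) = p :=
      eval_one_cyclotomic_prime
    rw [h1] at h2
    simpa [eval_prod] using h2.symm
  have hmem : ∀ c : ℕ, ¬ p ∣ c → η ^ c ∈ primitiveRoots p (RingOfIntegers K) := by
    intro c hc
    exact (mem_primitiveRoots hp.pos).mpr
      (hη.pow_of_coprime c ((hp.coprime_iff_not_dvd.mpr hc).symm))
  have hane : η ^ a ≠ η ^ b := by
    intro h
    exact hab (hη.pow_inj (by omega) (by omega) h)
  have hp2 : (1 - η ^ a) ^ 2 ∣ (p : RingOfIntegers K) := by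
    classical
    rw [hpfac, ← Finset.mul_prod_erase _ _ (hmem a hnda),
      ← Finset.mul_prod_erase _ _ (Finset.mem_erase.mpr ⟨hane.symm, hmem b hndb⟩)]
    rw [sq]
    exact mul_dvd_mul dvd_rfl ((key a b hnda).mul_right _)
  -- the two fundamental identities
  have Fa : (1 - η ^ a) ^ e * αa = (x : RingOfIntegers K) + η ^ a * (y : RingOfIntegers K) := by
    apply inj
    simp only [map_mul, map_pow, map_sub, map_one, map_add, map_intCast, hmapη, hαa]
    rw [mul_comm]
    exact div_mul_cancel₀ _ (pow_ne_zero _ (hζc a hnda))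
  have Fb : (1 - η ^ b) ^ e * αb = (x : RingOfIntegers K) + η ^ b * (y : RingOfIntegers K) := by
    apply inj
    simp only [map_mul, map_pow, map_sub, map_one, map_add, map_intCast, hmapη, hαb]
    rw [mul_comm]
    exact div_mul_cancel₀ _ (pow_ne_zero _ (hζc b hndb))
  -- suppose not
  by_contra hcon
  obtain ⟨𝔪, hmax, hle⟩ := Ideal.exists_le_maximal _ hcon
  have hprime : 𝔪.IsPrime := hmax.isPrime
  have hone : (1 : RingOfIntegers K) ∉ 𝔪 := fun h => hmax.ne_top ((Ideal.eq_top_iff_one _).mpr h)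
  have hma : αa ∈ 𝔪 := hle (Ideal.mem_sup_left (Ideal.mem_span_singleton_self αa))
  have hmb : αb ∈ 𝔪 := hle (Ideal.mem_sup_right (Ideal.mem_span_singleton_self αb))
  have hyb : (η ^ a - η ^ b) * (y : RingOfIntegers K) ∈ 𝔪 := by
    have hid : (η ^ a - η ^ b) * (y : RingOfIntegers K)
        = (1 - η ^ a) ^ e * αa - (1 - η ^ b) ^ e * αb := by
      rw [Fa, Fb]; ring
    rw [hid]
    exact Ideal.sub_mem _ (Ideal.mul_mem_left _ _ hma) (Ideal.mul_mem_left _ _ hmb)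
  have hxb : (η ^ a - η ^ b) * (x : RingOfIntegers K) ∈ 𝔪 := by
    have hid : (η ^ a - η ^ b) * (x : RingOfIntegers K)
        = η ^ a * ((1 - η ^ b) ^ e * αb) - η ^ b * ((1 - η ^ a) ^ e * αa) := by
      rw [Fa, Fb]; ring
    rw [hid]
    exact Ideal.sub_mem _ (Ideal.mul_mem_left _ _ (Ideal.mul_mem_left _ _ hmb))
      (Ideal.mul_mem_left _ _ (Ideal.mul_mem_left _ _ hma))
  obtain ⟨u, v, huv⟩ := hxy
  have huv' : (u : RingOfIntegers K) * x + (v : RingOfIntegers K) * y = 1 := by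
    have := congrArg (fun z : ℤ => (z : RingOfIntegers K)) huv
    push_cast at this
    simpa using this
  have hdm : η ^ a - η ^ b ∈ 𝔪 := by
    have hid : η ^ a - η ^ b
        = (u : RingOfIntegers K) * ((η ^ a - η ^ b) * x)
          + (v : RingOfIntegers K) * ((η ^ a - η ^ b) * y) := by
      calc η ^ a - η ^ b = (η ^ a - η ^ b)
            * ((u : RingOfIntegers K) * x + (v : RingOfIntegers K) * y) := by rw [huv', mul_one]
        _ = _ := by ring
    rw [hid]
    exact Ideal.add_mem _ (Ideal.mul_mem_left _ _ hxb) (Ideal.mul_mem_left _ _ hyb)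
  -- from this, 1 - η ^ (a + p - b) ∈ 𝔪
  have hndd : ¬ p ∣ (a + p - b) := by
    intro hdvd
    obtain ⟨k, hk⟩ := hdvd
    rcases k with _ | _ | k
    · omega
    · omega
    · have : p * (k + 1 + 1) ≥ p * 2 := Nat.mul_le_mul_left p (by omega)
      omega
  have hd𝔪 : 1 - η ^ (a + p - b) ∈ 𝔪 := by
    have hpowid : η ^ b * η ^ (a + p - b) = η ^ a := by
      rw [← pow_add, show b + (a + p - b) = a + p by omega, pow_add, hη.pow_eq_one, mul_one]
    have hfact : η ^ a - η ^ b = η ^ b * (η ^ (a + p - b) - 1) := by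
      rw [mul_sub, hpowid, mul_one]
    rcases hprime.mem_or_mem (hfact ▸ hdm) with h | h
    · exfalso
      apply hone
      have h1 : η ^ (p - b) * η ^ b ∈ 𝔪 := Ideal.mul_mem_left _ _ h
      rwa [← pow_add, show p - b + b = p by omega, hη.pow_eq_one] at h1
    · have : 1 - η ^ (a + p - b) = -(η ^ (a + p - b) - 1) := by ring
      rw [this]
      exact neg_mem h
  have h1a𝔪 : 1 - η ^ a ∈ 𝔪 := by
    obtain ⟨t, ht⟩ := key (a + p - b) a hndd
    rw [ht]
    exact Ideal.mul_mem_right _ _ hd𝔪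
  have hp𝔪 : (p : RingOfIntegers K) ∈ 𝔪 := by
    obtain ⟨t, ht⟩ := hp2
    rw [ht, sq, mul_assoc]
    exact Ideal.mul_mem_right _ _ h1a𝔪
  -- now split on e
  interval_cases e
  · -- e = 0
    rw [pow_zero, one_mul] at Fa
    have hnd2 : ¬ (p : ℤ) ∣ (x + y) := fun h => absurd (he1.mpr h) (by norm_num)
    have hxy𝔪 : ((x : RingOfIntegers K) + y) ∈ 𝔪 := by
      have hid : (x : RingOfIntegers K) + y = αa + (1 - η ^ a) * (y : RingOfIntegers K) := by
        rw [Fa]; ring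
      rw [hid]
      exact Ideal.add_mem _ hma (Ideal.mul_mem_right _ _ h1a𝔪)
    have hcop : IsCoprime ((p : ℤ)) (x + y) := by
      have hpZ : Prime ((p : ℤ)) := Nat.prime_iff_prime_int.mp hp
      exact hpZ.coprime_iff_not_dvd.mpr hnd2
    obtain ⟨s, t, hst⟩ := hcop
    apply hone
    have hid : (1 : RingOfIntegers K)
        = (s : RingOfIntegers K) * (p : RingOfIntegers K)
          + (t : RingOfIntegers K) * ((x : RingOfIntegers K) + y) := by
      have := congrArg (fun z : ℤ => (z : RingOfIntegers K)) hst
      push_cast at this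
      rw [← this]
    rw [hid]
    exact Ideal.add_mem _ (Ideal.mul_mem_left _ _ hp𝔪) (Ideal.mul_mem_left _ _ hxy𝔪)
  · -- e = 1
    rw [pow_one] at Fa
    obtain ⟨k, hk⟩ := he1.mp rfl
    have hxyc : (x : RingOfIntegers K) + y = (p : RingOfIntegers K) * k := by
      have := congrArg (fun z : ℤ => (z : RingOfIntegers K)) hk
      push_cast at this
      simpa using this
    obtain ⟨t, ht⟩ := hp2
    have hy𝔪 : (y : RingOfIntegers K) ∈ 𝔪 := by
      have hcancel : αa + (y : RingOfIntegers K)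
          = (1 - η ^ a) * (t * (k : RingOfIntegers K)) := by
        apply mul_left_cancel₀ (hηc a hnda)
        calc (1 - η ^ a) * (αa + (y : RingOfIntegers K))
            = ((x : RingOfIntegers K) + η ^ a * y) + (1 - η ^ a) * y := by rw [mul_add, Fa]
          _ = (x : RingOfIntegers K) + y := by ring
          _ = (p : RingOfIntegers K) * k := hxyc
          _ = (1 - η ^ a) ^ 2 * t * k := by rw [ht]
          _ = (1 - η ^ a) * ((1 - η ^ a) * (t * k)) := by ring
      have hid : (y : RingOfIntegers K) = (1 - η ^ a) * (t * (k : RingOfIntegers K)) - αa := by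
        rw [← hcancel]; ring
      rw [hid]
      exact Ideal.sub_mem _ (Ideal.mul_mem_right _ _ h1a𝔪) hma
    have hx𝔪 : (x : RingOfIntegers K) ∈ 𝔪 := by
      have hid : (x : RingOfIntegers K) = (p : RingOfIntegers K) * k - y := by
        rw [← hxyc]; ring
      rw [hid]
      exact Ideal.sub_mem _ (Ideal.mul_mem_right _ _ hp𝔪) hy𝔪
    apply hone
    rw [← huv']
    exact Ideal.add_mem _ (Ideal.mul_mem_left _ _ hx𝔪) (Ideal.mul_mem_left _ _ hy𝔪)
end
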